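/- arXiv:1710.11307 — 2 statements merged into one kernel-verified Lean document; each statement's English description precedes it below -/
import Mathlib

section
/- (Opial–Passty ergodic lemma.) Let H be a real Hilbert space and S ⊆ H a nonempty set. Let (α_k) be a sequence of positive reals with Σ_{k≥1} α_k = +∞, let (x_k) be a sequence in H, and define the weighted averages z_k := (1/τ_k) Σ_{n=1}^k α_n x_n with τ_k := Σ_{n=1}^k α_n. If (i) for every z ∈ S the limit lim_{k→∞} ‖x_k − z‖ exists, and (ii) every weak sequential cluster point of (z_k) belongs to S, then (z_k) converges weakly to a point of S. -/
/-!
For `p, q ∈ S`, polarization writes `2⟪p - q, x_k⟫` as `‖x_k - q‖² - ‖x_k - p‖² + ‖p‖² - ‖q‖²`,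
which converges; by the weighted Cesàro theorem (this is where `∑ α_k = ∞` enters) so does
`⟪p - q, z_k⟫`. If `p` and `q` are two weak cluster points of `(z_k)`, both lying in `S`, this limit
equals both `⟪p - q, p⟫` and `⟪p - q, q⟫`, whence `‖p - q‖² = 0`. The sequence `(z_k)` is bounded
because `(x_k)` is, so by weak sequential compactness it has a cluster point, and a bounded
sequence with a single weak cluster point converges weakly to it.
-/

open scoped RealInnerProductSpace
open Filter Topology Finset Asymptotics

theorem Filter.Tendsto.centerMass_range {E : Type*} [NormedAddCommGroup E] [NormedSpace ℝ E]
    {u : ℕ → E} {l : E} {w : ℕ → ℝ} (h : Tendsto u atTop (𝓝 l)) (hw : 0 ≤ w)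
    (hsum : Tendsto (fun n => ∑ i ∈ range n, w i) atTop atTop) :
    Tendsto (fun n => (range n).centerMass w u) atTop (𝓝 l) := by
  have hsmall : (fun n => ∑ i ∈ range n, w i • (u i - l)) =o[atTop]
      fun n => ∑ i ∈ range n, w i := by
    refine IsLittleO.sum_range ?_ hw hsum
    simpa using (isBigO_refl w atTop).smul_isLittleO
      ((isLittleO_one_iff ℝ).2 (tendsto_sub_nhds_zero_iff.2 h))
  rw [← tendsto_sub_nhds_zero_iff, ← isLittleO_one_iff ℝ]
  refine ((isBigO_refl (fun n => (∑ i ∈ range n, w i)⁻¹) atTop).smul_isLittleO hsmall).congr' ?_ ?_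
  · filter_upwards [hsum.eventually_gt_atTop 0] with n hn
    simp only [centerMass, smul_sub, sum_sub_distrib, ← sum_smul, smul_smul,
      inv_mul_cancel₀ hn.ne', one_smul]
  · filter_upwards [hsum.eventually_gt_atTop 0] with n hn
    exact inv_mul_cancel₀ hn.ne'

theorem Finset.centerMass_Icc_one {E : Type*} [AddCommGroup E] [Module ℝ E] (w : ℕ → ℝ)
    (x : ℕ → E) (k : ℕ) :
    (Icc 1 k).centerMass w x = (range k).centerMass (fun i => w (i + 1)) fun i => x (i + 1) := by
  have hIcc : Icc 1 k = (range k).map (addRightEmbedding 1) := by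
    rw [range_eq_Ico, map_add_right_Ico, zero_add, Ico_add_one_right_eq_Icc]
  simp [centerMass, hIcc]

theorem Finset.norm_centerMass_le {ι E : Type*} [SeminormedAddCommGroup E] [NormedSpace ℝ E]
    {t : Finset ι} {w : ι → ℝ} {x : ι → E} {C : ℝ} (hw : ∀ i ∈ t, 0 ≤ w i)
    (hpos : 0 < ∑ i ∈ t, w i) (hx : ∀ i ∈ t, ‖x i‖ ≤ C) : ‖t.centerMass w x‖ ≤ C := by
  simpa using (convex_closedBall (0 : E) C).centerMass_mem hw hpos (by simpa using hx)

theorem Filter.Tendsto.exists_norm_le_of_norm_sub {E : Type*} [SeminormedAddCommGroup E]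
    {x : ℕ → E} {a : E} {L : ℝ} (h : Tendsto (fun k => ‖x k - a‖) atTop (𝓝 L)) :
    ∃ C, ∀ k, ‖x k‖ ≤ C := by
  obtain ⟨C, hC⟩ := h.bddAbove_range
  exact ⟨C + ‖a‖, fun k => by linarith [norm_le_insert' (x k) a, hC ⟨k, rfl⟩]⟩

section WeakConvergence

variable {H : Type*} [NormedAddCommGroup H] [InnerProductSpace ℝ H]

def WeakTendsto (v : ℕ → H) (y : H) : Prop :=
  ∀ w : H, Tendsto (fun k => ⟪w, v k⟫) atTop (𝓝 ⟪w, y⟫)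

def IsWeakSeqClusterPt (v : ℕ → H) (y : H) : Prop :=
  ∃ φ : ℕ → ℕ, StrictMono φ ∧ WeakTendsto (v ∘ φ) y

theorem real_inner_centerMass {ι : Type*} (t : Finset ι) (c : ι → ℝ) (v : ι → H) (w : H) :
    ⟪w, t.centerMass c v⟫ = t.centerMass c fun i => ⟪w, v i⟫ := by
  simp only [centerMass, real_inner_smul_right, inner_sum, smul_eq_mul]

theorem Filter.Tendsto.inner_sub_of_norm_sub {ι : Type*} {l : Filter ι} {x : ι → H} {p q : H}
    {Lp Lq : ℝ} (hp : Tendsto (fun k => ‖x k - p‖) l (𝓝 Lp))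
    (hq : Tendsto (fun k => ‖x k - q‖) l (𝓝 Lq)) :
    Tendsto (fun k => ⟪p - q, x k⟫) l (𝓝 ((Lq ^ 2 - Lp ^ 2 + ‖p‖ ^ 2 - ‖q‖ ^ 2) / 2)) := by
  have hpolar (y : H) : ⟪p - q, y⟫ = (‖y - q‖ ^ 2 - ‖y - p‖ ^ 2 + ‖p‖ ^ 2 - ‖q‖ ^ 2) / 2 := by
    rw [norm_sub_sq_real, norm_sub_sq_real, inner_sub_left, real_inner_comm p, real_inner_comm q]
    ring
  simp_rw [hpolar]
  exact ((((hq.pow 2).sub (hp.pow 2)).add_const _).sub_const _).div_const 2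

/-- Sequential Banach–Alaoglu in the separable closed span `V` of the sequence, brought back to
`H` by the Riesz representation on `V` and the orthogonal projection onto `V`. -/
theorem exists_isWeakSeqClusterPt_of_norm_le [CompleteSpace H] {v : ℕ → H} {C : ℝ}
    (hv : ∀ k, ‖v k‖ ≤ C) : ∃ y, IsWeakSeqClusterPt v y := by
  set V : Submodule ℝ H := (Submodule.span ℝ (Set.range v)).topologicalClosure
  have : CompleteSpace V :=
    (Submodule.span ℝ (Set.range v)).isClosed_topologicalClosure.completeSpace_coe
  have : TopologicalSpace.SeparableSpace V :=
    ((Set.countable_range v).isSeparable.span.closure).separableSpace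
  have hvV (k : ℕ) : v k ∈ V :=
    Submodule.le_topologicalClosure _ (Submodule.subset_span (Set.mem_range_self k))
  let f (k : ℕ) : WeakDual ℝ V :=
    StrongDual.toWeakDual (InnerProductSpace.toDual ℝ V ⟨v k, hvV k⟩)
  have hf : ∀ k, f k ∈ WeakDual.toStrongDual ⁻¹' Metric.closedBall 0 C := fun k => by
    rw [Set.mem_preimage, Metric.mem_closedBall]
    refine (dist_zero_right (WeakDual.toStrongDual (f k))).trans_le ?_
    simpa [f] using hv k
  obtain ⟨g, -, φ, hφ, hfg⟩ := WeakDual.isSeqCompact_closedBall ℝ V 0 C hf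
  have hproj (w : H) (u : V) : ⟪w, (u : H)⟫ = ⟪u, V.orthogonalProjectionOnto w⟫ := by
    rw [Submodule.inner_orthogonalProjectionOnto_eq_of_mem_left, real_inner_comm]
  refine ⟨(InnerProductSpace.toDual ℝ V).symm (WeakDual.toStrongDual g), φ, hφ, fun w => ?_⟩
  rw [hproj, InnerProductSpace.toDual_symm_apply]
  exact (((WeakDual.eval_continuous _).tendsto g).comp hfg).congr fun k =>
    (hproj w ⟨v (φ k), hvV _⟩).symm

theorem IsWeakSeqClusterPt.eq_of_tendsto_inner_sub {v : ℕ → H} {p q : H}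
    (hp : IsWeakSeqClusterPt v p) (hq : IsWeakSeqClusterPt v q) {L : ℝ}
    (hL : Tendsto (fun k => ⟪p - q, v k⟫) atTop (𝓝 L)) : p = q := by
  obtain ⟨φ, hφ, hφp⟩ := hp
  obtain ⟨ψ, hψ, hψq⟩ := hq
  have hLp : ⟪p - q, p⟫ = L := tendsto_nhds_unique (hφp (p - q)) (hL.comp hφ.tendsto_atTop)
  have hLq : ⟪p - q, q⟫ = L := tendsto_nhds_unique (hψq (p - q)) (hL.comp hψ.tendsto_atTop)
  rw [← sub_eq_zero, ← inner_self_eq_zero (𝕜 := ℝ), inner_sub_right, hLp, hLq, sub_self]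

theorem weakTendsto_of_forall_isWeakSeqClusterPt_eq [CompleteSpace H] {v : ℕ → H} {C : ℝ}
    (hv : ∀ k, ‖v k‖ ≤ C) {p : H} (hp : ∀ q, IsWeakSeqClusterPt v q → q = p) :
    WeakTendsto v p := by
  intro w
  refine tendsto_of_subseq_tendsto fun ns hns => ?_
  obtain ⟨ψ, -, hψ⟩ := strictMono_subseq_of_tendsto_atTop hns
  obtain ⟨q, θ, hθ, hθq⟩ := exists_isWeakSeqClusterPt_of_norm_le fun k => hv (ns (ψ k))
  obtain rfl := hp q ⟨ns ∘ ψ ∘ θ, hψ.comp hθ, hθq⟩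
  exact ⟨ψ ∘ θ, hθq w⟩

theorem exists_weakTendsto_of_tendsto_inner_sub [CompleteSpace H] {v : ℕ → H} {C : ℝ}
    (hv : ∀ k, ‖v k‖ ≤ C) {S : Set H} (hS : ∀ y, IsWeakSeqClusterPt v y → y ∈ S)
    (hconv : ∀ p ∈ S, ∀ q ∈ S, ∃ L, Tendsto (fun k => ⟪p - q, v k⟫) atTop (𝓝 L)) :
    ∃ p ∈ S, WeakTendsto v p := by
  obtain ⟨p, hp⟩ := exists_isWeakSeqClusterPt_of_norm_le hv
  refine ⟨p, hS p hp, weakTendsto_of_forall_isWeakSeqClusterPt_eq hv fun q hq => ?_⟩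
  obtain ⟨L, hL⟩ := hconv q (hS q hq) p (hS p hp)
  exact hq.eq_of_tendsto_inner_sub hp hL

end WeakConvergence

/-- Opial–Passty ergodic lemma: if the distances `‖x_k − z‖` converge for every `z ∈ S` and
every weak sequential cluster point of the weighted averages `(z_k)` belongs to `S`, then
`(z_k)` converges weakly to a point of `S`. -/
theorem opial_passty_ergodic_lemma
    {H : Type*} [NormedAddCommGroup H] [InnerProductSpace ℝ H] [CompleteSpace H]
    (S : Set H) (hS : S.Nonempty)
    (α : ℕ → ℝ) (hα : ∀ k, 1 ≤ k → 0 < α k)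
    (hαdiv : ¬ Summable (fun k : ℕ => α k))
    (x z : ℕ → H)
    (hz : ∀ k, 1 ≤ k →
      z k = (∑ n ∈ Finset.Icc 1 k, α n)⁻¹ • ∑ n ∈ Finset.Icc 1 k, α n • x n)
    (hlim : ∀ w ∈ S, ∃ L : ℝ, Tendsto (fun k => ‖x k - w‖) atTop (𝓝 L))
    (hcluster : ∀ y : H,
      (∃ φ : ℕ → ℕ, StrictMono φ ∧
        ∀ w : H, Tendsto (fun j => ⟪w, z (φ j)⟫) atTop (𝓝 ⟪w, y⟫)) → y ∈ S) :
    ∃ p ∈ S, ∀ w : H, Tendsto (fun k => ⟪w, z k⟫) atTop (𝓝 ⟪w, p⟫) := by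
  have hαpos (i : ℕ) : 0 < α (i + 1) := hα _ i.succ_pos
  have hτ : Tendsto (fun k => ∑ i ∈ range k, α (i + 1)) atTop atTop :=
    (not_summable_iff_tendsto_nat_atTop_of_nonneg fun i => (hαpos i).le).1
      ((summable_nat_add_iff 1).not.2 hαdiv)
  have hzavg (k : ℕ) (hk : 1 ≤ k) :
      z k = (range k).centerMass (fun i => α (i + 1)) fun i => x (i + 1) := by
    rw [hz k hk, ← centerMass_Icc_one]
    rfl
  obtain ⟨C, hxC⟩ : ∃ C, ∀ k, ‖x k‖ ≤ C := by
    obtain ⟨w₀, hw₀⟩ := hS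
    obtain ⟨L₀, hL₀⟩ := hlim w₀ hw₀
    exact hL₀.exists_norm_le_of_norm_sub
  have hzC (k : ℕ) : ‖z k‖ ≤ max C ‖z 0‖ := by
    rcases Nat.eq_zero_or_pos k with rfl | hk
    · exact le_max_right _ _
    rw [hzavg k hk]
    exact le_max_of_le_left <| norm_centerMass_le (fun i _ => (hαpos i).le)
      (sum_pos (fun i _ => hαpos i) (nonempty_range_iff.2 hk.ne')) fun i _ => hxC _
  refine exists_weakTendsto_of_tendsto_inner_sub hzC hcluster fun p hp q hq => ?_
  obtain ⟨Lp, hLp⟩ := hlim p hp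
  obtain ⟨Lq, hLq⟩ := hlim q hq
  refine ⟨_, (((hLp.inner_sub_of_norm_sub hLq).comp (tendsto_add_atTop_nat 1)).centerMass_range
    (fun i => (hαpos i).le) hτ).congr' ?_⟩
  filter_upwards [eventually_ge_atTop 1] with k hk
  rw [hzavg k hk, real_inner_centerMass]
  rfl
end

section
/- Let m be a positive integer, for each i = 1,…,m let A_i : H ⇉ H be a maximally monotone set-valued operator, let α > 0, u ∈ H, and v_i ∈ A_i(u) for i = 1,…,m. Let ψ_0 ∈ H and define ψ_i := J_{αA_i}(ψ_{i−1}) for i = 1,…,m. Then ‖ψ_m − u‖² − ‖ψ_0 − u‖² + Σ_{i=1}^m ‖ψ_i − ψ_{i−1}‖² ≤ 2α Σ_{i=1}^m ⟨v_i, u − ψ_i⟩. -/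
open scoped RealInnerProductSpace Pointwise BigOperators

/-- A set-valued operator `A : H ⇉ H` is monotone. -/
def IsMonotoneOp {H : Type*} [NormedAddCommGroup H] [InnerProductSpace ℝ H]
    (A : H → Set H) : Prop :=
  ∀ ⦃x y u v : H⦄, u ∈ A x → v ∈ A y → 0 ≤ ⟪x - y, u - v⟫

/-- A set-valued operator is maximally monotone. -/
def IsMaxMonotoneOp {H : Type*} [NormedAddCommGroup H] [InnerProductSpace ℝ H]
    (A : H → Set H) : Prop :=
  IsMonotoneOp A ∧
    ∀ B : H → Set H, IsMonotoneOp B → (∀ x, A x ⊆ B x) → ∀ x, B x ⊆ A x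

/-! Each resolvent step `φ ↦ ψ = J_{αA} φ` satisfies
`‖ψ - u‖² - ‖φ - u‖² + ‖ψ - φ‖² = 2⟪ψ - u, ψ - φ⟫ ≤ 2α⟪v, u - ψ⟫`, the inequality being
monotonicity of `A` at the pairs `(ψ, (φ - ψ)/α)` and `(u, v)`. Summing over the chain, the
first two terms telescope. -/

theorem Finset.sum_Icc_one_sub_pred (f : ℕ → ℝ) (n : ℕ) :
    ∑ i ∈ Finset.Icc 1 n, (f i - f (i - 1)) = f n - f 0 := by
  rw [← Finset.Ico_add_one_right_eq_Icc, Finset.sum_Ico_eq_sum_range]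
  simpa [add_comm 1] using Finset.sum_range_sub f n

theorem norm_sq_sub_norm_sq_add_norm_sub_sq {H : Type*} [NormedAddCommGroup H]
    [InnerProductSpace ℝ H] (a b : H) :
    ‖a‖ ^ 2 - ‖b‖ ^ 2 + ‖a - b‖ ^ 2 = 2 * ⟪a, a - b⟫ := by
  rw [norm_sub_sq_real, inner_sub_right, real_inner_self_eq_norm_sq]
  ring

theorem IsMonotoneOp.resolvent_step_le {H : Type*} [NormedAddCommGroup H]
    [InnerProductSpace ℝ H] {A : H → Set H} (hA : IsMonotoneOp A) {α : ℝ} (hα : 0 ≤ α)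
    {u v φ ψ : H} (hv : v ∈ A u) (hψ : φ - ψ ∈ α • A ψ) :
    ‖ψ - u‖ ^ 2 - ‖φ - u‖ ^ 2 + ‖ψ - φ‖ ^ 2 ≤ 2 * α * ⟪v, u - ψ⟫ := by
  obtain ⟨w, hw, hαw⟩ := hψ
  have hmono : 0 ≤ α * ⟪ψ - u, w - v⟫ := mul_nonneg hα (hA hw hv)
  have hdiff : ψ - u - (φ - u) = -(α • w) := by
    rw [show α • w = φ - ψ from hαw]
    abel
  have hlhs : ‖ψ - u‖ ^ 2 - ‖φ - u‖ ^ 2 + ‖ψ - φ‖ ^ 2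
      = 2 * α * ⟪v, u - ψ⟫ - 2 * (α * ⟪ψ - u, w - v⟫) := by
    rw [show ψ - φ = ψ - u - (φ - u) by abel, norm_sq_sub_norm_sq_add_norm_sub_sq, hdiff,
      inner_neg_right, inner_smul_right, ← neg_sub ψ u, inner_neg_right,
      real_inner_comm (ψ - u) v, inner_sub_right]
    ring
  linarith

theorem resolvent_chain_inequality_general
    {H : Type*} [NormedAddCommGroup H] [InnerProductSpace ℝ H]
    (m : ℕ)
    (A : ℕ → H → Set H) (hA : ∀ i, 1 ≤ i → i ≤ m → IsMaxMonotoneOp (A i))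
    (α : ℝ) (hα : 0 < α)
    (u : H) (v : ℕ → H) (hv : ∀ i, 1 ≤ i → i ≤ m → v i ∈ A i u)
    (ψ : ℕ → H)
    (hψ : ∀ i, 1 ≤ i → i ≤ m → ψ (i - 1) - ψ i ∈ α • A i (ψ i)) :
    ‖ψ m - u‖ ^ 2 - ‖ψ 0 - u‖ ^ 2 + ∑ i ∈ Finset.Icc 1 m, ‖ψ i - ψ (i - 1)‖ ^ 2
      ≤ 2 * α * ∑ i ∈ Finset.Icc 1 m, ⟪v i, u - ψ i⟫ := by
  have hstep : ∀ i ∈ Finset.Icc 1 m,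
      ‖ψ i - u‖ ^ 2 - ‖ψ (i - 1) - u‖ ^ 2 + ‖ψ i - ψ (i - 1)‖ ^ 2
        ≤ 2 * α * ⟪v i, u - ψ i⟫ := by
    intro i hi
    obtain ⟨h1, h2⟩ := Finset.mem_Icc.mp hi
    exact (hA i h1 h2).1.resolvent_step_le hα.le (hv i h1 h2) (hψ i h1 h2)
  have hsum := Finset.sum_le_sum hstep
  rwa [Finset.sum_add_distrib, Finset.sum_Icc_one_sub_pred (fun i ↦ ‖ψ i - u‖ ^ 2),
    ← Finset.mul_sum] at hsum

/-- The telescoped resolvent inequality along a chain of resolvent steps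
`ψ_i = J_{αA_i}(ψ_{i−1})`, `i = 1, …, m`. -/
theorem resolvent_chain_inequality
    {H : Type*} [NormedAddCommGroup H] [InnerProductSpace ℝ H]
    (m : ℕ) (hm : 1 ≤ m)
    (A : ℕ → H → Set H) (hA : ∀ i, 1 ≤ i → i ≤ m → IsMaxMonotoneOp (A i))
    (α : ℝ) (hα : 0 < α)
    (u : H) (v : ℕ → H) (hv : ∀ i, 1 ≤ i → i ≤ m → v i ∈ A i u)
    (ψ : ℕ → H)
    (hψ : ∀ i, 1 ≤ i → i ≤ m → ψ (i - 1) - ψ i ∈ α • A i (ψ i)) :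
    ‖ψ m - u‖ ^ 2 - ‖ψ 0 - u‖ ^ 2 + ∑ i ∈ Finset.Icc 1 m, ‖ψ i - ψ (i - 1)‖ ^ 2
      ≤ 2 * α * ∑ i ∈ Finset.Icc 1 m, ⟪v i, u - ψ i⟫ :=
  resolvent_chain_inequality_general m A hA α hα u v hv ψ hψ
end
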